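/- arXiv:0801.2014 — 6 statements merged into one kernel-verified Lean document; each statement's English description precedes it below -/
import Mathlib

section
/- A matrix φ = [[a, b], [c, e]] ∈ M₂(R) lies in the kernel of D if and only if e = a and b = −z⁻¹·c; and φ lies in the image of D if and only if e = a, b = −z⁻¹·c, and both a and c belong to the principal ideal (z − s)R. -/
open LaurentPolynomial

/-!
With `u = z - s` and `v = z⁻¹`, the differential is
`D !![a, b; c, e] = !![u (b + v c), v u (e - a); u (a - e), u (b + v c)]`, an identity valid over
any commutative ring. Since `u ≠ 0` in the domain `ℂ[z, z⁻¹]`, `D φ = 0` forces `e = a` and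
`b = -v c`. Every value of `D` has this shape with `a, c ∈ (u)`, and conversely
`D !![y, x; 0, 0] = !![u x, -v (u y); u y, u x]` realises each such matrix.
-/

/-- The matrix `d` of the matrix factorization `F` of `W - 2s`, `W = z + s²/z`,
over `R = ℂ[z,z⁻¹]`. -/
noncomputable def dMat (s : ℂ) : Matrix (Fin 2) (Fin 2) (LaurentPolynomial ℂ) :=
  !![0, T (-1) * (T 1 - C s); T 1 - C s, 0]

/-- The grading sign matrix `ε = diag(1, -1)`. -/
noncomputable def epsMat : Matrix (Fin 2) (Fin 2) (LaurentPolynomial ℂ) :=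
  !![1, 0; 0, -1]

/-- The differential of the endomorphism complex `Hom_{CF(W-2s)}(F, F)`:
`D(φ) = d·φ − (ε·φ·ε)·d`. -/
noncomputable def Dmap (s : ℂ) (φ : Matrix (Fin 2) (Fin 2) (LaurentPolynomial ℂ)) :
    Matrix (Fin 2) (Fin 2) (LaurentPolynomial ℂ) :=
  dMat s * φ - (epsMat * φ * epsMat) * dMat s

namespace Matrix

variable {R : Type*} [CommRing R]

/-- The differential of the endomorphism complex of a rank-one matrix factorization with odd
part `!![0, v * u; u, 0]`. -/
def offDiagDifferential (u v : R) (φ : Matrix (Fin 2) (Fin 2) R) : Matrix (Fin 2) (Fin 2) R :=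
  !![0, v * u; u, 0] * φ - (!![1, 0; 0, -1] * φ * !![1, 0; 0, -1]) * !![0, v * u; u, 0]

theorem offDiagDifferential_of (u v a b c e : R) :
    offDiagDifferential u v !![a, b; c, e] =
      !![u * (b + v * c), v * u * (e - a); u * (a - e), u * (b + v * c)] := by
  ext i j
  fin_cases i <;> fin_cases j <;>
    simp [offDiagDifferential] <;> ring

theorem offDiagDifferential_of_eq_zero_iff {u : R} (hu : u ∈ nonZeroDivisors R)
    (v a b c e : R) :
    offDiagDifferential u v !![a, b; c, e] = 0 ↔ e = a ∧ b = -v * c := by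
  rw [offDiagDifferential_of]
  simp only [← ext_iff, Fin.forall_fin_two, of_apply, cons_val', cons_val_zero, cons_val_one,
    empty_val', cons_val_fin_one, zero_apply, mul_left_mem_nonZeroDivisors_eq_zero_iff hu,
    sub_eq_zero]
  constructor
  · rintro ⟨⟨hbc, -⟩, ha, -⟩
    exact ⟨ha.symm, by linear_combination hbc⟩
  · rintro ⟨rfl, rfl⟩
    refine ⟨⟨?_, ?_⟩, ?_, ?_⟩ <;> ring

theorem of_mem_range_offDiagDifferential_iff (u v a b c e : R) :
    !![a, b; c, e] ∈ Set.range (offDiagDifferential u v) ↔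
      e = a ∧ b = -v * c ∧ a ∈ Ideal.span {u} ∧ c ∈ Ideal.span {u} := by
  simp only [Ideal.mem_span_singleton]
  constructor
  · rintro ⟨ψ, hψ⟩
    rw [eta_fin_two ψ, offDiagDifferential_of] at hψ
    simp only [← ext_iff, Fin.forall_fin_two, of_apply, cons_val', cons_val_zero, cons_val_one,
      empty_val', cons_val_fin_one] at hψ
    obtain ⟨⟨ha, hb⟩, hc, he⟩ := hψ
    exact ⟨he.symm.trans ha, by linear_combination -hb - v * hc,
      ⟨_, ha.symm⟩, ⟨_, hc.symm⟩⟩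
  · rintro ⟨rfl, rfl, ⟨x, rfl⟩, ⟨y, rfl⟩⟩
    refine ⟨!![y, x; 0, 0], ?_⟩
    rw [offDiagDifferential_of]
    simp only [mul_zero, add_zero, zero_sub, sub_zero, mul_neg, neg_mul, mul_assoc]

end Matrix

theorem LaurentPolynomial.T_one_sub_C_ne_zero {R : Type*} [CommRing R] [Nontrivial R] (s : R) :
    (T 1 - C s : R[T;T⁻¹]) ≠ 0 := by
  simpa using Polynomial.toLaurent_ne_zero.mpr (Polynomial.X_sub_C_ne_zero s)

theorem Dmap_eq_offDiagDifferential (s : ℂ) :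
    Dmap s = Matrix.offDiagDifferential (T 1 - C s) (T (-1)) :=
  rfl

theorem kernel_image_of_differential_general (s : ℂ)
    (a b c e : LaurentPolynomial ℂ) :
    (Dmap s !![a, b; c, e] = 0 ↔ e = a ∧ b = -(T (-1)) * c) ∧
    (!![a, b; c, e] ∈ Set.range (Dmap s) ↔
      e = a ∧ b = -(T (-1)) * c ∧
        a ∈ Ideal.span {T 1 - C s} ∧
        c ∈ Ideal.span {(T 1 - C s : LaurentPolynomial ℂ)}) := by
  rw [Dmap_eq_offDiagDifferential]
  exact ⟨Matrix.offDiagDifferential_of_eq_zero_iff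
      (mem_nonZeroDivisors_of_ne_zero (T_one_sub_C_ne_zero s)) _ _ _ _ _,
    Matrix.of_mem_range_offDiagDifferential_iff _ _ _ _ _ _⟩

/-- Characterization of the kernel and the image of the differential `D`. -/
theorem kernel_image_of_differential (s : ℂ) (hs : s ≠ 0)
    (a b c e : LaurentPolynomial ℂ) :
    (Dmap s !![a, b; c, e] = 0 ↔ e = a ∧ b = -(T (-1)) * c) ∧
    (!![a, b; c, e] ∈ Set.range (Dmap s) ↔
      e = a ∧ b = -(T (-1)) * c ∧
        a ∈ Ideal.span {T 1 - C s} ∧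
        c ∈ Ideal.span {(T 1 - C s : LaurentPolynomial ℂ)}) :=
  kernel_image_of_differential_general s a b c e
end

section
/- The quotient ℂ-vector space (ker D)/(im D) is 2-dimensional, with basis given by the classes of the identity matrix 1 and of φ₀ = [[0, z⁻¹], [−1, 0]]; moreover φ₀·φ₀ + s⁻¹·1 lies in the image of D. Consequently the cohomology algebra Hom_{MF(W−2s)}(F, F) is the Clifford algebra on one generator x over ℂ with relation x² = −1/s. -/
/-!
Put `v = z - s` and `cycleMat a b = [[a, z⁻¹ b], [-b, a]]`. A direct computation gives
`D φ = cycleMat (v (φ₀₁ + z⁻¹ φ₁₀)) (v (φ₁₁ - φ₀₀))`. As `v` is a non-zero-divisor, the cycles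
of `D` are exactly the matrices `cycleMat a b`, and the boundaries are those with `v ∣ a` and
`v ∣ b`. Evaluation at `z = s` identifies `R/(v)` with `ℂ`, so `(a, b) ↦ (a(s), b(s))` maps the
cohomology isomorphically onto `ℂ²`, sending `1 = cycleMat 1 0` and `φ₀ = cycleMat 0 1` to the
standard basis. Finally `φ₀² + s⁻¹ = cycleMat (s⁻¹ - z⁻¹) 0`, and `s⁻¹ - z⁻¹` vanishes at `z = s`.
-/
open LaurentPolynomial

/-- The differential `D(φ) = d·φ − (ε·φ·ε)·d` of the endomorphism complex
`Hom_{CF(W-2s)}(F, F)`, as a ℂ-linear map. -/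
noncomputable def Dlin (s : ℂ) :
    Matrix (Fin 2) (Fin 2) (LaurentPolynomial ℂ) →ₗ[ℂ]
      Matrix (Fin 2) (Fin 2) (LaurentPolynomial ℂ) :=
  LinearMap.mulLeft ℂ (dMat s) -
    (LinearMap.mulRight ℂ (dMat s)) ∘ₗ (LinearMap.mulLeft ℂ epsMat) ∘ₗ
      (LinearMap.mulRight ℂ epsMat)

/-- The odd degree generator `φ₀` of the cohomology of the endomorphism complex. -/
noncomputable def phi0 : Matrix (Fin 2) (Fin 2) (LaurentPolynomial ℂ) :=
  !![0, T (-1); -1, 0]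

namespace LaurentPolynomial

section Eval

variable {R A : Type*} [CommSemiring R] [CommSemiring A] [Algebra R A]

noncomputable def aeval (x : Aˣ) : R[T;T⁻¹] →ₐ[R] A :=
  { eval₂ (algebraMap R A) x with
    commutes' := fun r => by simp [← C_eq_algebraMap] }

@[simp]
theorem aeval_T (x : Aˣ) (n : ℤ) : aeval (R := R) x (T n) = ((x ^ n : Aˣ) : A) :=
  eval₂_T _ _ n

@[simp]
theorem aeval_C (x : Aˣ) (r : R) : aeval x (C r) = algebraMap R A r :=
  eval₂_C _ _ r

@[simp]
theorem aeval_toLaurent (x : Aˣ) (p : Polynomial R) :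
    aeval x (Polynomial.toLaurent p) = Polynomial.aeval (x : A) p :=
  eval₂_toLaurent _ _ p

end Eval

theorem T_one_sub_C_ne_zero_s4 {R : Type*} [Ring R] [Nontrivial R] (r : R) :
    (T 1 - C r : R[T;T⁻¹]) ≠ 0 := by
  rw [← Polynomial.toLaurent_X, ← Polynomial.toLaurent_C, ← map_sub, Ne,
    Polynomial.toLaurent_eq_zero]
  exact Polynomial.X_sub_C_ne_zero r

theorem T_one_sub_C_dvd_iff {R : Type*} [CommRing R] (x : Rˣ) (p : R[T;T⁻¹]) :
    T 1 - C (x : R) ∣ p ↔ aeval x p = 0 := by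
  constructor
  · rintro ⟨q, rfl⟩
    simp
  · intro hp
    obtain ⟨n, P, hP⟩ := p.exists_T_pow
    have hroot : P.IsRoot (x : R) := by
      simpa [hp] using congrArg (aeval x) hP
    obtain ⟨Q, rfl⟩ := Polynomial.dvd_iff_isRoot.2 hroot
    refine ⟨Polynomial.toLaurent Q * T (-n), ?_⟩
    calc p = p * T n * T (-n) := by rw [mul_T_assoc, add_neg_cancel, T_zero, mul_one]
      _ = _ := by rw [← hP]; simp [mul_assoc]

end LaurentPolynomial

theorem Submodule.exists_basis_quotient_of_ker_eq {R M ι : Type*} [Ring R] [AddCommGroup M]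
    [Module R M] [Fintype ι] [DecidableEq ι] {N : Submodule R M} (f : M →ₗ[R] ι → R)
    (hf : LinearMap.ker f = N) (v : ι → M) (hv : ∀ i, f (v i) = Pi.single i 1) :
    ∃ B : Module.Basis ι R (M ⧸ N), ∀ i, B i = Submodule.Quotient.mk (v i) := by
  subst hf
  have hsurj : Function.Surjective f := fun y =>
    ⟨∑ i, y i • v i, by simp [hv, ← pi_eq_sum_univ']⟩
  refine ⟨.ofEquivFun (f.quotKerEquivOfSurjective hsurj), fun i => ?_⟩
  rw [Module.Basis.coe_ofEquivFun, LinearEquiv.symm_apply_eq,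
    LinearMap.quotKerEquivOfSurjective_apply_mk, hv]

local notation "M₂" => Matrix (Fin 2) (Fin 2) (LaurentPolynomial ℂ)

noncomputable def cycleMat (a b : LaurentPolynomial ℂ) : M₂ :=
  !![a, T (-1) * b; -b, a]

theorem cycleMat_inj {a b a' b' : LaurentPolynomial ℂ} :
    cycleMat a b = cycleMat a' b' ↔ a = a' ∧ b = b' := by
  refine ⟨fun h => ⟨congrFun (congrFun h 0) 0, neg_inj.1 (congrFun (congrFun h 1) 0)⟩, ?_⟩
  rintro ⟨rfl, rfl⟩
  rfl

theorem cycleMat_zero : cycleMat 0 0 = 0 := by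
  ext i j : 1
  fin_cases i <;> fin_cases j <;> simp [cycleMat]

theorem cycleMat_one_zero : cycleMat 1 0 = 1 := by
  ext i j : 1
  fin_cases i <;> fin_cases j <;> simp [cycleMat]

theorem cycleMat_zero_one : cycleMat 0 1 = phi0 := by
  ext i j : 1
  fin_cases i <;> fin_cases j <;> simp [cycleMat, phi0]

theorem Dlin_apply (s : ℂ) (φ : M₂) :
    Dlin s φ = cycleMat ((T 1 - C s) * (φ 0 1 + T (-1) * φ 1 0))
      ((T 1 - C s) * (φ 1 1 - φ 0 0)) := by
  have hD : Dlin s φ = dMat s * φ - epsMat * φ * epsMat * dMat s := by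
    simp [Dlin, mul_assoc]
  rw [hD]
  conv_lhs => rw [Matrix.eta_fin_two φ]
  simp only [dMat, epsMat, cycleMat, Matrix.mul_fin_two, Matrix.of_sub_of, Matrix.cons_sub_cons,
    Matrix.empty_sub_empty, EmbeddingLike.apply_eq_iff_eq, Matrix.vecCons_inj, and_true]
  refine ⟨⟨?_, ?_⟩, ?_, ?_⟩ <;> ring

theorem Dlin_cycleMat (s : ℂ) (a b : LaurentPolynomial ℂ) : Dlin s (cycleMat a b) = 0 := by
  rw [Dlin_apply, ← cycleMat_zero]
  simp [cycleMat]

theorem mem_ker_Dlin_iff (s : ℂ) (φ : M₂) :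
    φ ∈ LinearMap.ker (Dlin s) ↔ φ = cycleMat (φ 0 0) (-φ 1 0) := by
  refine ⟨fun h => ?_, fun h => by rw [LinearMap.mem_ker, h, Dlin_cycleMat]⟩
  rw [LinearMap.mem_ker, Dlin_apply, ← cycleMat_zero, cycleMat_inj] at h
  obtain ⟨h01, h11⟩ := h
  replace h01 := (mul_eq_zero.1 h01).resolve_left (T_one_sub_C_ne_zero_s4 s)
  replace h11 := (mul_eq_zero.1 h11).resolve_left (T_one_sub_C_ne_zero_s4 s)
  conv_lhs => rw [Matrix.eta_fin_two φ]
  simp only [cycleMat, neg_neg, EmbeddingLike.apply_eq_iff_eq, Matrix.vecCons_inj, and_true,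
    true_and]
  exact ⟨by linear_combination h01, by linear_combination h11⟩

theorem cycleMat_mem_range_Dlin_iff (s : ℂ) (a b : LaurentPolynomial ℂ) :
    cycleMat a b ∈ LinearMap.range (Dlin s) ↔ T 1 - C s ∣ a ∧ T 1 - C s ∣ b := by
  constructor
  · rintro ⟨ψ, hψ⟩
    rw [Dlin_apply, cycleMat_inj] at hψ
    exact ⟨⟨_, hψ.1.symm⟩, ⟨_, hψ.2.symm⟩⟩
  · rintro ⟨⟨a, rfl⟩, ⟨b, rfl⟩⟩
    refine ⟨!![0, a; 0, b], ?_⟩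
    simp [Dlin_apply]

theorem one_mem_ker_Dlin (s : ℂ) : (1 : M₂) ∈ LinearMap.ker (Dlin s) := by
  rw [← cycleMat_one_zero, LinearMap.mem_ker, Dlin_cycleMat]

theorem phi0_mem_ker_Dlin (s : ℂ) : phi0 ∈ LinearMap.ker (Dlin s) := by
  rw [← cycleMat_zero_one, LinearMap.mem_ker, Dlin_cycleMat]

theorem phi0_mul_phi0_add_inv_smul_one_mem_range (s : ℂ) (hs : s ≠ 0) :
    phi0 * phi0 + s⁻¹ • (1 : M₂) ∈ LinearMap.range (Dlin s) := by
  have h : phi0 * phi0 + s⁻¹ • (1 : M₂) = cycleMat (C s⁻¹ - T (-1)) 0 := by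
    simp only [phi0, cycleMat, Matrix.one_fin_two, Matrix.mul_fin_two, Matrix.smul_of,
      Matrix.of_add_of, Matrix.smul_cons, Matrix.smul_empty, Matrix.cons_add_cons,
      Matrix.empty_add_empty, smul_eq_C_mul, EmbeddingLike.apply_eq_iff_eq, Matrix.vecCons_inj,
      and_true]
    refine ⟨⟨?_, ?_⟩, ?_, ?_⟩ <;> ring
  rw [h, cycleMat_mem_range_Dlin_iff, ← Units.val_mk0 hs, T_one_sub_C_dvd_iff]
  simp

noncomputable def cycleEval (s : ℂ) (hs : s ≠ 0) :
    LinearMap.ker (Dlin s) →ₗ[ℂ] Fin 2 → ℂ where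
  toFun φ := ![aeval (Units.mk0 s hs) (φ.1 0 0), aeval (Units.mk0 s hs) (-φ.1 1 0)]
  map_add' φ ψ := by
    ext i; fin_cases i <;> simp [add_comm]
  map_smul' c φ := by
    ext i; fin_cases i <;> simp

theorem ker_cycleEval (s : ℂ) (hs : s ≠ 0) :
    LinearMap.ker (cycleEval s hs) =
      (LinearMap.range (Dlin s)).comap (LinearMap.ker (Dlin s)).subtype := by
  ext ⟨φ, hφ⟩
  have hdvd := T_one_sub_C_dvd_iff (Units.mk0 s hs)
  simp only [Units.val_mk0] at hdvd
  have hrange : φ ∈ LinearMap.range (Dlin s) ↔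
      aeval (Units.mk0 s hs) (φ 0 0) = 0 ∧ aeval (Units.mk0 s hs) (-φ 1 0) = 0 := by
    conv_lhs => rw [(mem_ker_Dlin_iff s φ).1 hφ]
    rw [cycleMat_mem_range_Dlin_iff, hdvd, hdvd]
  simpa [cycleEval] using hrange.symm

theorem cycleEval_one (s : ℂ) (hs : s ≠ 0) :
    cycleEval s hs ⟨1, one_mem_ker_Dlin s⟩ = Pi.single 0 1 := by
  ext i; fin_cases i <;> simp [cycleEval]

theorem cycleEval_phi0 (s : ℂ) (hs : s ≠ 0) :
    cycleEval s hs ⟨phi0, phi0_mem_ker_Dlin s⟩ = Pi.single 1 1 := by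
  ext i; fin_cases i <;> simp [cycleEval, phi0]

/-- The cohomology `(ker D)/(im D)` is a 2-dimensional ℂ-vector space with basis
the classes of `1` and `φ₀`, and `φ₀·φ₀ + s⁻¹·1 ∈ im D`; hence the cohomology
algebra is the Clifford algebra `ℂ⟨x⟩/(x² = -1/s)`. -/
theorem cohomology_of_endomorphism_complex_is_clifford (s : ℂ) (hs : s ≠ 0) :
    ∃ (h1 : (1 : Matrix (Fin 2) (Fin 2) (LaurentPolynomial ℂ)) ∈ LinearMap.ker (Dlin s))
      (h0 : phi0 ∈ LinearMap.ker (Dlin s)),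
      (∃ B : Module.Basis (Fin 2) ℂ
          (LinearMap.ker (Dlin s) ⧸
            (LinearMap.range (Dlin s)).comap (LinearMap.ker (Dlin s)).subtype),
        B 0 = Submodule.Quotient.mk ⟨1, h1⟩ ∧
        B 1 = Submodule.Quotient.mk ⟨phi0, h0⟩) ∧
      phi0 * phi0 + s⁻¹ • (1 : Matrix (Fin 2) (Fin 2) (LaurentPolynomial ℂ)) ∈
        LinearMap.range (Dlin s) := by
  refine ⟨one_mem_ker_Dlin s, phi0_mem_ker_Dlin s, ?_,
    phi0_mul_phi0_add_inv_smul_one_mem_range s hs⟩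
  obtain ⟨B, hB⟩ := Submodule.exists_basis_quotient_of_ker_eq (cycleEval s hs)
    (ker_cycleEval s hs) ![⟨1, one_mem_ker_Dlin s⟩, ⟨phi0, phi0_mem_ker_Dlin s⟩]
    (Fin.forall_fin_two.2 ⟨cycleEval_one s hs, cycleEval_phi0 s hs⟩)
  exact ⟨B, hB 0, hB 1⟩
end

section
/- For every φ ∈ ker D, the matrix (1 − s²z⁻²)·φ lies in the image of D; that is, multiplication by ∂_zW = 1 − s²z⁻² acts by zero on the cohomology (ker D)/(im D), making the cohomology a module over the Jacobian ring ℂ[z, z⁻¹]/(∂_zW). -/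
open LaurentPolynomial

/-- The homotopy matrix `δ = ∂_z d = !![0, s z⁻²; 1, 0]`. -/
noncomputable def delMat (s : ℂ) : Matrix (Fin 2) (Fin 2) (LaurentPolynomial ℂ) :=
  !![0, C s * T (-2); 1, 0]

lemma eps_del (s : ℂ) : epsMat * delMat s = -(delMat s * epsMat) := by
  ext i j : 2
  fin_cases i <;> fin_cases j <;>
    simp [epsMat, delMat, Matrix.mul_apply, Fin.sum_univ_two]

lemma key_scalar (s : ℂ) : T (-1) * (T 1 - C s) + C s * T (-2) * (T 1 - C s)
    = (1 - C (s ^ 2) * T (-2) : LaurentPolynomial ℂ) := by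
  have h1 : (T (-1) * T 1 : LaurentPolynomial ℂ) = 1 := by rw [← T_add]; norm_num
  have h2 : (T (-2) * T 1 : LaurentPolynomial ℂ) = T (-1) := by rw [← T_add]; norm_num
  have h3 : (C (s ^ 2) : LaurentPolynomial ℂ) = C s * C s := by rw [sq, map_mul]
  linear_combination h1 + C s * h2 + T (-2) * h3

lemma d_del (s : ℂ) :
    dMat s * delMat s + delMat s * dMat s
      = (1 - C (s ^ 2) * T (-2) : LaurentPolynomial ℂ) • 1 := by
  have hC : (C (s ^ 2) : LaurentPolynomial ℂ) = C s ^ 2 := by rw [map_pow]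
  refine Matrix.ext fun i j => ?_
  fin_cases i <;> fin_cases j <;>
    simp [dMat, delMat, Matrix.mul_apply, Fin.sum_univ_two, Matrix.one_apply] <;>
    linear_combination key_scalar s - T (-2) * hC

/-- Multiplication by `∂_z W = 1 − s²z⁻²` kills the cohomology `(ker D)/(im D)`,
so the cohomology is a module over the Jacobian ring `ℂ[z,z⁻¹]/(∂_z W)`. -/
theorem jacobian_ring_kills_cohomology (s : ℂ) (hs : s ≠ 0)
    (φ : Matrix (Fin 2) (Fin 2) (LaurentPolynomial ℂ)) (hφ : Dlin s φ = 0) :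
    ((1 - C (s ^ 2) * T (-2) : LaurentPolynomial ℂ)) • φ ∈ LinearMap.range (Dlin s) := by
  simp only [Dlin, LinearMap.sub_apply, LinearMap.mulLeft_apply, LinearMap.coe_comp,
    Function.comp_apply, LinearMap.mulRight_apply, sub_eq_zero] at hφ
  refine ⟨delMat s * φ, ?_⟩
  simp only [Dlin, LinearMap.sub_apply, LinearMap.mulLeft_apply, LinearMap.coe_comp,
    Function.comp_apply, LinearMap.mulRight_apply]
  have h1 : epsMat * (delMat s * φ * epsMat) * dMat s
      = -(delMat s * (dMat s * φ)) := by
    calc epsMat * (delMat s * φ * epsMat) * dMat s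
        = (epsMat * delMat s) * (φ * epsMat * dMat s) := by noncomm_ring
      _ = (-(delMat s * epsMat)) * (φ * epsMat * dMat s) := by rw [eps_del]
      _ = -(delMat s * (epsMat * (φ * epsMat) * dMat s)) := by noncomm_ring
      _ = -(delMat s * (dMat s * φ)) := by rw [← hφ]
  rw [h1]
  calc dMat s * (delMat s * φ) - -(delMat s * (dMat s * φ))
      = (dMat s * delMat s + delMat s * dMat s) * φ := by noncomm_ring
    _ = ((1 - C (s ^ 2) * T (-2) : LaurentPolynomial ℂ) • 1) * φ := by rw [d_del]
    _ = (1 - C (s ^ 2) * T (-2) : LaurentPolynomial ℂ) • φ := by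
        rw [smul_mul_assoc, one_mul]
end

section
/- Let c ∈ ℂ with c ≠ 0 and let A = ℂ[X]/(X² − c), the Clifford algebra over ℂ on one generator x with relation x² = c. Regard A as a module over the enveloping algebra A ⊗_ℂ A via the multiplication map A ⊗_ℂ A → A, (a ⊗ b)·m = a·m·b. Then A is projective as an A ⊗_ℂ A-module. -/
/-!
`A` is separable over `ℂ`: the element `e = (2c)⁻¹ (x ⊗ x) + ½ (1 ⊗ 1)` of `A ⊗ A` satisfies
`μ e = 1` and `(a ⊗ 1) e = (1 ⊗ a) e` for every `a` (it suffices to check this on the generator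
`x`, where it follows from `x² = c`). Hence `a ↦ (a ⊗ 1) e` is an `A ⊗ A`-linear section of the
multiplication map `μ : A ⊗ A → A`, and `A` is a direct summand of the free module `A ⊗ A`.
-/

open Polynomial TensorProduct

/-- The Clifford algebra `ℂ⟨x⟩/(x² = c)` on one generator. -/
abbrev Cliff (c : ℂ) : Type :=
  Polynomial ℂ ⧸ Ideal.span {(X ^ 2 - Polynomial.C c : Polynomial ℂ)}

/-- `A` as a module over its enveloping algebra `A ⊗[ℂ] A` via the
multiplication map `(a ⊗ b) • m = a·m·b`. -/
noncomputable instance (c : ℂ) : Module (Cliff c ⊗[ℂ] Cliff c) (Cliff c) :=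
  Module.compHom _ (Algebra.TensorProduct.lmul' ℂ (S := Cliff c)).toRingHom

open Algebra.TensorProduct (lmul' lmul'_apply_tmul tmul_mul_tmul)

section SeparabilityElement

variable {R S : Type*} [CommRing R] [CommRing S] [Algebra R S] {t : S ⊗[R] S}

theorem tmul_one_mul_eq_one_tmul_mul_of_adjoin_eq_top {G : Set S} (hG : Algebra.adjoin R G = ⊤)
    (h : ∀ g ∈ G, (g ⊗ₜ[R] 1) * t = (1 ⊗ₜ g) * t) (s : S) :
    (s ⊗ₜ[R] 1) * t = (1 ⊗ₜ s) * t := by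
  have hs : s ∈ Algebra.adjoin R G := hG ▸ Algebra.mem_top
  induction hs using Algebra.adjoin_induction with
  | mem g hg => exact h g hg
  | algebraMap r => rw [Algebra.algebraMap_eq_smul_one, smul_tmul]
  | add a b _ _ ha hb => rw [add_tmul, tmul_add, add_mul, add_mul, ha, hb]
  | mul a b _ _ ha hb =>
    calc (a * b) ⊗ₜ[R] 1 * t = (a ⊗ₜ 1) * ((b ⊗ₜ 1) * t) := by
          rw [← mul_assoc, tmul_mul_tmul, mul_one]
      _ = (1 ⊗ₜ b) * ((a ⊗ₜ 1) * t) := by rw [hb, mul_left_comm]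
      _ = (1 ⊗ₜ (a * b)) * t := by rw [ha, ← mul_assoc, tmul_mul_tmul, mul_one, mul_comm b]

theorem lmul'_tmul_one_mul (ht : ∀ s : S, (s ⊗ₜ[R] 1) * t = (1 ⊗ₜ s) * t) (r : S ⊗[R] S) :
    (lmul' R r ⊗ₜ[R] 1) * t = r * t := by
  induction r using TensorProduct.induction_on with
  | zero => simp
  | add p q hp hq => rw [map_add, add_tmul, add_mul, hp, hq, add_mul]
  | tmul a b =>
    calc (lmul' R (a ⊗ₜ[R] b) ⊗ₜ[R] 1) * t = (a ⊗ₜ 1) * ((b ⊗ₜ 1) * t) := by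
          rw [lmul'_apply_tmul, ← mul_assoc, tmul_mul_tmul, mul_one]
      _ = (a ⊗ₜ b) * t := by rw [ht, ← mul_assoc, tmul_mul_tmul, mul_one, one_mul]

theorem Module.Projective.of_separabilityElement [Module (S ⊗[R] S) S]
    (hsmul : ∀ (r : S ⊗[R] S) (s : S), r • s = lmul' R r * s)
    (ht : ∀ s : S, (s ⊗ₜ[R] 1) * t = (1 ⊗ₜ s) * t) (ht₁ : lmul' R t = 1) :
    Module.Projective (S ⊗[R] S) S := by
  let μ : S ⊗[R] S →ₗ[S ⊗[R] S] S :=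
    { toFun := lmul' R
      map_add' := map_add _
      map_smul' r p := by rw [hsmul, smul_eq_mul, map_mul, RingHom.id_apply] }
  let σ : S →ₗ[S ⊗[R] S] S ⊗[R] S :=
    { toFun s := (s ⊗ₜ 1) * t
      map_add' a b := by rw [add_tmul, add_mul]
      map_smul' r s := by
        rw [hsmul, RingHom.id_apply, smul_eq_mul, mul_left_comm, ← lmul'_tmul_one_mul ht r,
          ← mul_assoc, tmul_mul_tmul, mul_one, mul_comm s] }
  refine Module.Projective.of_split σ μ (LinearMap.ext fun s => ?_)
  show lmul' R ((s ⊗ₜ 1) * t) = s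
  rw [map_mul, ht₁, lmul'_apply_tmul, mul_one, mul_one]

end SeparabilityElement

namespace AdjoinRoot

variable {R : Type*} [CommRing R] (c u : R)

local notation "A" => AdjoinRoot (X ^ 2 - C c)

theorem root_X_sq_sub_C_mul_self : root (X ^ 2 - C c) * root (X ^ 2 - C c) = c • (1 : A) := by
  have h := eval₂_root (X ^ 2 - C c)
  rw [eval₂_sub, eval₂_X_pow, eval₂_C, sub_eq_zero] at h
  rw [← sq, h, Algebra.smul_def, mul_one]
  rfl

noncomputable def separabilityElementXSqSubC : A ⊗[R] A :=
  u • (root (X ^ 2 - C c) ⊗ₜ root (X ^ 2 - C c)) + (u * c) • (1 ⊗ₜ 1)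

variable {c u}

theorem root_tmul_one_mul_separabilityElementXSqSubC :
    (root (X ^ 2 - C c) ⊗ₜ[R] 1) * separabilityElementXSqSubC c u =
      (1 ⊗ₜ root (X ^ 2 - C c)) * separabilityElementXSqSubC c u := by
  simp only [separabilityElementXSqSubC, mul_add, mul_smul_comm, tmul_mul_tmul,
    root_X_sq_sub_C_mul_self, mul_one, one_mul, smul_tmul', tmul_smul, smul_smul]
  rw [add_comm, mul_comm c, smul_tmul]

theorem lmul'_separabilityElementXSqSubC (hu : 2 * c * u = 1) :
    lmul' R (separabilityElementXSqSubC c u) = 1 := by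
  rw [separabilityElementXSqSubC, map_add, map_smul, map_smul, lmul'_apply_tmul, lmul'_apply_tmul,
    root_X_sq_sub_C_mul_self, mul_one, smul_smul, ← add_smul, ← two_mul,
    show 2 * (u * c) = 1 by linear_combination hu, one_smul]

end AdjoinRoot

/-- For `c ≠ 0`, the Clifford algebra `A = ℂ[X]/(X² - c)` is projective as a
module over its enveloping algebra `A ⊗[ℂ] A`. -/
theorem clifford_projective_over_enveloping (c : ℂ) (hc : c ≠ 0) :
    Module.Projective (Cliff c ⊗[ℂ] Cliff c) (Cliff c) := by
  have hu : 2 * c * (2 * c)⁻¹ = 1 := mul_inv_cancel₀ (mul_ne_zero two_ne_zero hc)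
  refine Module.Projective.of_separabilityElement (fun _ _ => rfl)
    (tmul_one_mul_eq_one_tmul_mul_of_adjoin_eq_top AdjoinRoot.adjoinRoot_eq_top ?_)
    (AdjoinRoot.lmul'_separabilityElementXSqSubC hu)
  rintro _ rfl
  exact AdjoinRoot.root_tmul_one_mul_separabilityElementXSqSubC
end

section
/- For every τ ∈ ℂ with Im τ > 0 and every z ∈ ℂ, the theta addition formula holds: θ[0,0](τ, z)² = θ[0,0](2τ, 0)·θ[0,0](2τ, 2z) + θ[1/2, 0](2τ, 0)·θ[1/2, 0](2τ, 2z). Explicitly, (Σ_{m∈ℤ} exp(πiτm² + 2πimz))² = (Σ_{m∈ℤ} exp(2πiτm²))·(Σ_{m∈ℤ} exp(2πiτm² + 4πimz)) + (Σ_{m∈ℤ} exp(2πiτ(m + 1/2)²))·(Σ_{m∈ℤ} exp(2πiτ(m + 1/2)² + 4πi(m + 1/2)z)). (This identity verifies that the mirror functor Φ from line bundles on E_τ to the Fukaya category of E^τ respects the composition m₂(e₁, e₁) = θ[0,0](2τ,0)e₂ + θ[1/2,0](2τ,0)e₃.) -/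
/-- The theta function with real characteristics `c′, c″`:
`θ[c′, c″](τ, z) = Σ_{m∈ℤ} exp(2πi(τ(m + c′)²/2 + (m + c′)(z + c″)))`. -/
noncomputable def theta (c' c'' : ℝ) (τ z : ℂ) : ℂ :=
  ∑' m : ℤ,
    Complex.exp (2 * Real.pi * Complex.I *
      (τ * ((m : ℂ) + (c' : ℂ)) ^ 2 / 2 + ((m : ℂ) + (c' : ℂ)) * (z + (c'' : ℂ))))

/-!
Expand `θ(τ, z) θ(τ, w)` as a double series over `(m, n) ∈ ℤ²` and split it according to the
parity of `m + n`. On the even coset write `(m, n) = (b + a, b - a)`: the exponent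
`τ (m² + n²) / 2 + m z + n w` becomes `τ a² + a (z - w) + τ b² + b (z + w)`, the product of the
summands of `θ(2τ, z - w)` and `θ(2τ, z + w)`. On the odd coset `(m, n) = (b + a + 1, b - a)`
the same computation produces the characteristic `1/2`. Taking `w = z` gives the formula.
-/

open Complex

noncomputable def thetaTerm (c' c'' : ℝ) (τ z : ℂ) (m : ℤ) : ℂ :=
  exp (2 * Real.pi * I * (τ * ((m : ℂ) + c') ^ 2 / 2 + ((m : ℂ) + c') * (z + c'')))

lemma thetaTerm_eq_mul_jacobiTheta₂_term (c' c'' : ℝ) (τ z : ℂ) (m : ℤ) :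
    thetaTerm c' c'' τ z m =
      exp (Real.pi * I * τ * c' ^ 2 + 2 * Real.pi * I * c' * (z + c'')) *
        jacobiTheta₂_term m (z + c'' + c' * τ) τ := by
  rw [thetaTerm, jacobiTheta₂_term, ← exp_add]
  ring_nf

lemma summable_norm_thetaTerm (c' c'' : ℝ) {τ : ℂ} (z : ℂ) (hτ : 0 < τ.im) :
    Summable fun m ↦ ‖thetaTerm c' c'' τ z m‖ := by
  simp only [thetaTerm_eq_mul_jacobiTheta₂_term, norm_mul]
  exact ((summable_jacobiTheta₂_term_iff _ _).mpr hτ).norm.mul_left _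

lemma hasSum_thetaTerm_mul_thetaTerm (c' c'' d' d'' : ℝ) {τ τ' : ℂ} (z w : ℂ)
    (hτ : 0 < τ.im) (hτ' : 0 < τ'.im) :
    HasSum (fun p : ℤ × ℤ ↦ thetaTerm c' c'' τ z p.1 * thetaTerm d' d'' τ' w p.2)
      (theta c' c'' τ z * theta d' d'' τ' w) := by
  have h := summable_norm_thetaTerm c' c'' z hτ
  have h' := summable_norm_thetaTerm d' d'' w hτ'
  exact h.of_norm.hasSum.mul h'.of_norm.hasSum (summable_mul_of_summable_norm h h')

def parityCosetEquiv : (ℤ × ℤ) ⊕ (ℤ × ℤ) ≃ ℤ × ℤ where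
  toFun := Sum.elim (fun p ↦ (p.2 + p.1, p.2 - p.1)) (fun p ↦ (p.2 + p.1 + 1, p.2 - p.1))
  invFun p :=
    if (p.1 + p.2) % 2 = 0 then .inl ((p.1 - p.2) / 2, (p.1 + p.2) / 2)
    else .inr ((p.1 - p.2 - 1) / 2, (p.1 + p.2 - 1) / 2)
  left_inv := by
    rintro (⟨a, b⟩ | ⟨a, b⟩)
    · have : (b + a + (b - a)) % 2 = 0 := by omega
      simp only [Sum.elim_inl, this, if_true, Sum.inl.injEq, Prod.mk.injEq]
      omega
    · have : (b + a + 1 + (b - a)) % 2 ≠ 0 := by omega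
      simp only [Sum.elim_inr, this, if_false, Sum.inr.injEq, Prod.mk.injEq]
      omega
  right_inv := by
    rintro ⟨m, n⟩
    by_cases h : (m + n) % 2 = 0
    · simp only [h, if_true, Sum.elim_inl, Prod.mk.injEq]
      omega
    · simp only [h, if_false, Sum.elim_inr, Prod.mk.injEq]
      omega

lemma thetaTerm_mul_thetaTerm_even (τ z w : ℂ) (a b : ℤ) :
    thetaTerm 0 0 τ z (b + a) * thetaTerm 0 0 τ w (b - a) =
      thetaTerm 0 0 (2 * τ) (z - w) a * thetaTerm 0 0 (2 * τ) (z + w) b := by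
  simp only [thetaTerm, ← exp_add]
  push_cast
  ring_nf

lemma thetaTerm_mul_thetaTerm_odd (τ z w : ℂ) (a b : ℤ) :
    thetaTerm 0 0 τ z (b + a + 1) * thetaTerm 0 0 τ w (b - a) =
      thetaTerm (1 / 2) 0 (2 * τ) (z - w) a * thetaTerm (1 / 2) 0 (2 * τ) (z + w) b := by
  simp only [thetaTerm, ← exp_add]
  push_cast
  ring_nf

theorem theta_mul_theta {τ : ℂ} (z w : ℂ) (hτ : 0 < τ.im) :
    theta 0 0 τ z * theta 0 0 τ w =
      theta 0 0 (2 * τ) (z - w) * theta 0 0 (2 * τ) (z + w) +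
        theta (1 / 2) 0 (2 * τ) (z - w) * theta (1 / 2) 0 (2 * τ) (z + w) := by
  have h2τ : 0 < (2 * τ).im := by simpa using hτ
  have hEven := hasSum_thetaTerm_mul_thetaTerm 0 0 0 0 (z - w) (z + w) h2τ h2τ
  have hOdd := hasSum_thetaTerm_mul_thetaTerm (1 / 2) 0 (1 / 2) 0 (z - w) (z + w) h2τ h2τ
  simp only [← thetaTerm_mul_thetaTerm_even τ z w, ← thetaTerm_mul_thetaTerm_odd τ z w]
    at hEven hOdd
  refine (hasSum_thetaTerm_mul_thetaTerm 0 0 0 0 z w hτ hτ).unique ?_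
  exact parityCosetEquiv.hasSum_iff.mp (hEven.sum hOdd)

/-- The theta addition formula
`θ[0,0](τ,z)² = θ[0,0](2τ,0)·θ[0,0](2τ,2z) + θ[1/2,0](2τ,0)·θ[1/2,0](2τ,2z)`,
verifying that the mirror functor respects the composition
`m₂(e₁,e₁) = θ[0,0](2τ,0)e₂ + θ[1/2,0](2τ,0)e₃`. -/
theorem theta_addition_formula (τ z : ℂ) (hτ : 0 < τ.im) :
    theta 0 0 τ z ^ 2 =
      theta 0 0 (2 * τ) 0 * theta 0 0 (2 * τ) (2 * z) +
        theta (1 / 2) 0 (2 * τ) 0 * theta (1 / 2) 0 (2 * τ) (2 * z) := by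
  rw [sq, theta_mul_theta z z hτ, sub_self, two_mul z]
end

section
/- Let n, m ∈ ℤ with n ≠ m and let a, b ∈ ℝ. Let π : ℝ² → ℝ²/ℤ² denote the quotient map onto the torus. Then the intersection of the images π({(t, nt + a) : t ∈ ℝ}) and π({(t, mt + b) : t ∈ ℝ}) of the two lines of slopes n and m is a finite set of cardinality exactly |n − m|. -/
/-!
The image on the torus of the line of slope `n` and offset `a` is the graph of
`x ↦ n • x + a` on the circle `ℝ/ℤ`, well defined because `n` is an integer. Two such graphs
meet over the solutions of `(n - m) • x = b - a`, a translate of the `(n - m)`-torsion of the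
circle, and that torsion consists of the `|n - m|` points `k / |n - m|`.
-/

noncomputable def torusQuot (p : ℝ × ℝ) : AddCircle (1 : ℝ) × AddCircle (1 : ℝ) :=
  ((p.1 : AddCircle (1 : ℝ)), (p.2 : AddCircle (1 : ℝ)))

namespace AddCircle

variable {𝕜 : Type*} [Field 𝕜] [LinearOrder 𝕜] [IsStrictOrderedRing 𝕜] [Archimedean 𝕜]
  {p : 𝕜} [hp : Fact (0 < p)]

theorem ncard_torsion {n : ℕ} (hn : 0 < n) : {u : AddCircle p | n • u = 0}.ncard = n := by
  have hn' : (0 : 𝕜) < n := Nat.cast_pos.mpr hn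
  have hIco {m : ℕ} (hm : m < n) : (m / n * p : 𝕜) ∈ Set.Ico 0 (0 + p) := by
    rw [zero_add]
    refine ⟨by have := hp.out; positivity, mul_lt_of_lt_one_left hp.out ?_⟩
    rw [div_lt_one hn']
    exact_mod_cast hm
  have hset : {u : AddCircle p | n • u = 0} =
      (fun m : ℕ ↦ ((m / n * p : 𝕜) : AddCircle p)) '' Finset.range n := by
    ext u
    simp [AddCircle.nsmul_eq_zero_iff hn]
  rw [hset, Set.InjOn.ncard_image, Set.ncard_coe_finset, Finset.card_range]
  intro m hm m' hm' h
  have := (coe_eq_coe_iff_of_mem_Ico (hIco (Finset.mem_range.mp hm))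
    (hIco (Finset.mem_range.mp hm'))).mp h
  rwa [mul_left_inj' hp.out.ne', div_left_inj' hn'.ne', Nat.cast_inj] at this

theorem ncard_zsmul_eq {c : ℤ} (hc : c ≠ 0) (d : AddCircle p) :
    {u : AddCircle p | c • u = d}.ncard = c.natAbs := by
  obtain ⟨r, rfl⟩ := QuotientAddGroup.mk_surjective d
  have hsol : c • ((r / c : 𝕜) : AddCircle p) = r := by
    rw [← coe_zsmul, zsmul_eq_mul, mul_div_cancel₀ _ (Int.cast_ne_zero.mpr hc)]
  have hcoset : {u : AddCircle p | c • u = r} =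
      (· + ((r / c : 𝕜) : AddCircle p)) '' {u | c • u = 0} := by
    ext u
    simp only [Set.image_add_right, Set.mem_preimage, Set.mem_ofPred_eq, ← sub_eq_add_neg]
    rw [smul_sub, hsol, sub_eq_zero]
  rw [hcoset, Set.ncard_image_of_injective _ (add_left_injective _)]
  simpa [natAbs_nsmul_eq_zero] using ncard_torsion (p := p) (Int.natAbs_pos.mpr hc)

end AddCircle

theorem Set.graphOn_univ_inter_graphOn_univ {α β : Type*} (f g : α → β) :
    univ.graphOn f ∩ univ.graphOn g = {x | f x = g x}.graphOn f := by
  ext ⟨x, y⟩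
  simp only [Set.mem_inter_iff, Set.mem_graphOn, Set.mem_univ, true_and, Set.mem_ofPred_eq]
  constructor
  · rintro ⟨rfl, h⟩
    exact ⟨h.symm, rfl⟩
  · rintro ⟨h, rfl⟩
    exact ⟨rfl, h.symm⟩

theorem torusQuot_image_line (n : ℤ) (a : ℝ) :
    torusQuot '' {p : ℝ × ℝ | ∃ t : ℝ, p = (t, (n : ℝ) * t + a)} =
      Set.univ.graphOn fun x : AddCircle (1 : ℝ) ↦ n • x + a := by
  have hcoe (t : ℝ) :
      ((n * t + a : ℝ) : AddCircle (1 : ℝ)) = n • (t : AddCircle (1 : ℝ)) + a := by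
    rw [AddCircle.coe_add, ← zsmul_eq_mul, AddCircle.coe_zsmul]
  ext ⟨x, y⟩
  simp only [Set.mem_graphOn, Set.mem_univ, true_and]
  constructor
  · rintro ⟨_, ⟨t, rfl⟩, h⟩
    simp only [torusQuot, Prod.mk.injEq] at h
    obtain ⟨rfl, rfl⟩ := h
    exact (hcoe t).symm
  · rintro rfl
    obtain ⟨t, rfl⟩ := QuotientAddGroup.mk_surjective x
    exact ⟨(t, n * t + a), ⟨t, rfl⟩, Prod.ext rfl (hcoe t)⟩

/-- Two lines of distinct integer slopes `n ≠ m` on the torus `ℝ²/ℤ²` intersect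
in a finite set of exactly `|n − m|` points. -/
theorem torus_lines_intersection_card (n m : ℤ) (hnm : n ≠ m) (a b : ℝ) :
    (torusQuot '' {p : ℝ × ℝ | ∃ t : ℝ, p = (t, (n : ℝ) * t + a)} ∩
        torusQuot '' {p : ℝ × ℝ | ∃ t : ℝ, p = (t, (m : ℝ) * t + b)}).Finite ∧
    (torusQuot '' {p : ℝ × ℝ | ∃ t : ℝ, p = (t, (n : ℝ) * t + a)} ∩
        torusQuot '' {p : ℝ × ℝ | ∃ t : ℝ, p = (t, (m : ℝ) * t + b)}).ncard =
      (n - m).natAbs := by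
  have hc : n - m ≠ 0 := sub_ne_zero.mpr hnm
  have hcrossing : {x : AddCircle (1 : ℝ) | n • x + a = m • x + b} =
      {x | (n - m) • x = ((b - a : ℝ) : AddCircle (1 : ℝ))} := by
    ext x
    rw [Set.mem_ofPred, Set.mem_ofPred, AddCircle.coe_sub, sub_smul,
      sub_eq_sub_iff_add_eq_add, add_comm (m • x)]
  rw [torusQuot_image_line, torusQuot_image_line, Set.graphOn_univ_inter_graphOn_univ]
  suffices h : ({x : AddCircle (1 : ℝ) | n • x + a = m • x + b}.graphOn
      fun x ↦ n • x + (a : AddCircle (1 : ℝ))).ncard = (n - m).natAbs from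
    ⟨Set.finite_of_ncard_ne_zero (h ▸ Int.natAbs_ne_zero.mpr hc), h⟩
  rw [Set.ncard_graphOn, hcrossing, AddCircle.ncard_zsmul_eq hc]
end
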